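/- Let p < ℓ be real numbers and let (A_N), (B_N) be real sequences with A_N/N² → A₂ ∈ ℝ and B_N/N → B₁ > 0. If −A₂/B₁² < p, then lim_{N→∞} I_{p,ℓ}(A_N, B_N) · e^{−f_N(p)} = 1, where f_N(k) = k A_N + k² B_N²/2. (Equivalently, I_{p,ℓ}(A_N,B_N) ≈ e^{f_N(p)} G(A_N/B_N + p B_N) at leading order, the argument of G tending to +∞.) -/
import Mathlib


open MeasureTheory Real Filter

/-- The standard Gaussian density `φ(v) = e^{-v²/2}/√(2π)` on `ℝ`. -/
noncomputable def gaussPDF (v : ℝ) : ℝ := Real.exp (-v ^ 2 / 2) / Real.sqrt (2 * Real.pi)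

/-- `I_{p,ℓ}(A,B) = ∫_ℝ φ(v) (1 + e^{A+Bv})^{p-ℓ} e^{ℓ(A+Bv)} dv`. -/
noncomputable def Iint (p ℓ A B : ℝ) : ℝ :=
  ∫ v : ℝ, gaussPDF v * (1 + Real.exp (A + B * v)) ^ (p - ℓ) * Real.exp (ℓ * (A + B * v))

/-- `f_N(k) = k A_N + k² B_N²/2`. -/
noncomputable def fExp (A B k : ℝ) : ℝ := k * A + k ^ 2 * B ^ 2 / 2

lemma gaussPDF_eq (v : ℝ) : gaussPDF v = ProbabilityTheory.gaussianPDFReal 0 1 v := by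
  simp [gaussPDF, ProbabilityTheory.gaussianPDFReal, div_eq_inv_mul, neg_div]

lemma gaussPDF_nonneg (v : ℝ) : 0 ≤ gaussPDF v := by
  unfold gaussPDF
  positivity

lemma gaussPDF_eq' : gaussPDF = ProbabilityTheory.gaussianPDFReal 0 1 := funext gaussPDF_eq

lemma integrable_gaussPDF : Integrable gaussPDF := by
  rw [gaussPDF_eq']; exact ProbabilityTheory.integrable_gaussianPDFReal 0 1

lemma integral_gaussPDF : ∫ v : ℝ, gaussPDF v = 1 := by
  rw [gaussPDF_eq']; exact ProbabilityTheory.integral_gaussianPDFReal_eq_one 0 one_ne_zero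

lemma continuous_gaussPDF : Continuous gaussPDF := by
  unfold gaussPDF
  fun_prop

/-- pointwise identity -/
lemma ptwise (p ℓ A B v : ℝ) :
    gaussPDF v * (1 + Real.exp (A + B * v)) ^ (p - ℓ) * Real.exp (ℓ * (A + B * v)) *
      Real.exp (-(fExp A B p)) =
    gaussPDF (v - p * B) * (1 + Real.exp (-(A + B * v))) ^ (p - ℓ) := by
  set x := A + B * v with hx
  have hbase : 1 + Real.exp x = Real.exp x * (1 + Real.exp (-x)) := by
    rw [mul_add, mul_one, ← Real.exp_add]
    simp [add_comm]
  have hsplit : (1 + Real.exp x) ^ (p - ℓ)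
      = Real.exp (x * (p - ℓ)) * (1 + Real.exp (-x)) ^ (p - ℓ) := by
    rw [hbase, Real.mul_rpow (Real.exp_nonneg _) (by positivity), Real.exp_mul]
  rw [hsplit]
  unfold gaussPDF
  rw [div_mul_eq_mul_div, div_mul_eq_mul_div, div_mul_eq_mul_div, div_mul_eq_mul_div]
  congr 1
  have : Real.exp (-v ^ 2 / 2) * (Real.exp (x * (p - ℓ)) * (1 + Real.exp (-x)) ^ (p - ℓ)) *
      Real.exp (ℓ * x) * Real.exp (-(fExp A B p))
      = (Real.exp (-v ^ 2 / 2) * Real.exp (x * (p - ℓ)) * Real.exp (ℓ * x) *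
        Real.exp (-(fExp A B p))) * (1 + Real.exp (-x)) ^ (p - ℓ) := by ring
  rw [this, ← Real.exp_add, ← Real.exp_add, ← Real.exp_add]
  congr 2
  rw [hx]
  unfold fExp
  ring

lemma key_rw (p ℓ A B : ℝ) :
    Iint p ℓ A B * Real.exp (-(fExp A B p)) =
    ∫ x : ℝ, gaussPDF x * (1 + Real.exp (-(A + B * (x + p * B)))) ^ (p - ℓ) := by
  rw [Iint, ← integral_mul_const]
  have h1 : (fun v : ℝ => gaussPDF v * (1 + Real.exp (A + B * v)) ^ (p - ℓ) *
      Real.exp (ℓ * (A + B * v)) * Real.exp (-(fExp A B p)))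
      = fun v : ℝ => gaussPDF (v - p * B) * (1 + Real.exp (-(A + B * v))) ^ (p - ℓ) := by
    funext v; exact ptwise p ℓ A B v
  rw [h1, ← integral_add_right_eq_self
    (fun v : ℝ => gaussPDF (v - p * B) * (1 + Real.exp (-(A + B * v))) ^ (p - ℓ)) (p * B)]
  simp only [add_sub_cancel_right]

/-- Second case of Proposition S1: for `p < ℓ` and `-A₂/B₁² < p`,
`I_{p,ℓ}(A_N, B_N) ≈ e^{f_N(p)}` at leading order. -/
theorem Iint_asymptotics_p (p ℓ A₂ B₁ : ℝ) (hpl : p < ℓ) (A B : ℕ → ℝ)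
    (hA : Tendsto (fun N : ℕ => A N / (N : ℝ) ^ 2) atTop (nhds A₂))
    (hB : Tendsto (fun N : ℕ => B N / (N : ℝ)) atTop (nhds B₁))
    (hB₁ : 0 < B₁) (h1 : -A₂ / B₁ ^ 2 < p) :
    Tendsto (fun N : ℕ => Iint p ℓ (A N) (B N) * Real.exp (-(fExp (A N) (B N) p)))
      atTop (nhds 1) := by
  have hL : 0 < A₂ + p * B₁ ^ 2 := by
    have := (div_lt_iff₀ (by positivity : (0:ℝ) < B₁ ^ 2)).mp h1
    linarith
  -- rewrite via key_rw
  simp only [key_rw]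
  have hDCT : Tendsto (fun N : ℕ => ∫ x : ℝ,
      gaussPDF x * (1 + Real.exp (-(A N + B N * (x + p * B N)))) ^ (p - ℓ))
      atTop (nhds (∫ v : ℝ, gaussPDF v)) := by
    apply tendsto_integral_of_dominated_convergence gaussPDF
    · intro N
      apply Continuous.aestronglyMeasurable
      apply continuous_gaussPDF.mul
      apply Continuous.rpow_const
      · fun_prop
      · intro x
        left
        positivity
    · exact integrable_gaussPDF
    · intro N
      filter_upwards with v
      have hpos : (0:ℝ) < 1 + Real.exp (-(A N + B N * (v + p * B N))) := by positivity
      rw [Real.norm_eq_abs, abs_mul, abs_of_nonneg (gaussPDF_nonneg v),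
        abs_of_nonneg (le_of_lt (Real.rpow_pos_of_pos hpos _))]
      have hle : (1 + Real.exp (-(A N + B N * (v + p * B N)))) ^ (p - ℓ) ≤ 1 :=
        Real.rpow_le_one_of_one_le_of_nonpos
          (by linarith [Real.exp_pos (-(A N + B N * (v + p * B N)))])
          (by linarith)
      calc gaussPDF v * (1 + Real.exp (-(A N + B N * (v + p * B N)))) ^ (p - ℓ)
          ≤ gaussPDF v * 1 := mul_le_mul_of_nonneg_left hle (gaussPDF_nonneg v)
        _ = gaussPDF v := mul_one _
    · filter_upwards with v
      -- show tendsto of the integrand to gaussPDF v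
      have ht : Tendsto (fun N : ℕ => A N + B N * (v + p * B N)) atTop atTop := by
        have hq : Tendsto (fun N : ℕ => A N / (N : ℝ) ^ 2 + (B N / N) * v * ((N : ℝ)⁻¹)
            + p * (B N / N) ^ 2) atTop (nhds (A₂ + B₁ * v * 0 + p * B₁ ^ 2)) := by
          exact ((hA.add (((hB.mul tendsto_const_nhds)).mul
            (tendsto_inv_atTop_zero.comp tendsto_natCast_atTop_atTop))).add
            ((hB.pow 2).const_mul p))
        have hq' : Tendsto (fun N : ℕ => A N / (N : ℝ) ^ 2 + (B N / N) * v * ((N : ℝ)⁻¹)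
            + p * (B N / N) ^ 2) atTop (nhds (A₂ + p * B₁ ^ 2)) := by
          simpa using hq
        have hN2 : Tendsto (fun N : ℕ => ((N : ℝ)) ^ 2) atTop atTop :=
          (tendsto_pow_atTop (two_ne_zero)).comp tendsto_natCast_atTop_atTop
        have hmul := hq'.pos_mul_atTop hL hN2
        apply hmul.congr'
        filter_upwards [eventually_ge_atTop 1] with N hN
        have hN0 : (N : ℝ) ≠ 0 := by
          exact_mod_cast Nat.one_le_iff_ne_zero.mp hN
        field_simp
        ring
      have hexp : Tendsto (fun N : ℕ => Real.exp (-(A N + B N * (v + p * B N)))) atTop (nhds 0) :=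
        Real.tendsto_exp_atBot.comp (tendsto_neg_atBot_iff.mpr ht)
      have hbase : Tendsto (fun N : ℕ => 1 + Real.exp (-(A N + B N * (v + p * B N))))
          atTop (nhds 1) := by simpa using (tendsto_const_nhds.add hexp)
      have hr : Tendsto (fun N : ℕ => (1 + Real.exp (-(A N + B N * (v + p * B N)))) ^ (p - ℓ))
          atTop (nhds 1) := by
        have := Filter.Tendsto.rpow_const (p := p - ℓ) hbase (Or.inl one_ne_zero)
        simpa using this
      have := hr.const_mul (gaussPDF v)
      simpa using this

  rw [integral_gaussPDF] at hDCT
  exact hDCT
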